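/- arXiv:1707.02799 — 3 statements merged into one kernel-verified Lean document; each statement's English description precedes it below -/
import Mathlib

section
/- For every 0 ≤ k ≤ n−1 and every φ ∈ C^k(X,ℝ), d*dφ = (k+2) M⁺_k φ; and for every 0 ≤ k ≤ n and every φ ∈ C^k(X,ℝ) (with k ≥ 1 or interpreting the empty sums as zero), dd*φ = (k+1) M⁻_k φ. -/
/-!
Framework: a pure `n`-dimensional finite weighted simplicial complex, following
Kaufman–Oppenheim, "High Order Random Walks: Beyond Spectral Gap".

A complex is given by its finset of faces (finsets of a vertex type `V`) together with
a weight function `m`.  We index levels by **cardinality**: `X.K c` is the set of faces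
with `c` elements, i.e. the set `X(k)` of `k`-dimensional faces for `k = c - 1`
(so `X(-1) = X.K 0`, and a pure `n`-dimensional complex has top level `X.K (n+1)`).
-/

noncomputable section

open Finset

/-- The data of a weighted simplicial complex: a finite family of faces and a weight. -/
structure WSC (V : Type*) [DecidableEq V] where
  faces : Finset (Finset V)
  m : Finset V → ℝ

namespace WSC

variable {V : Type*} [DecidableEq V]

/-- `X.IsWSC n` : `X` is a pure `n`-dimensional finite weighted simplicial complex:
the faces form a nonempty downward-closed family, every face is contained in a face with
`n+1` elements (and no face has more), the weights are positive, and the weight of every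
face of cardinality `≤ n` is the sum of the weights of the faces covering it. -/
def IsWSC (X : WSC V) (n : ℕ) : Prop :=
  ∅ ∈ X.faces ∧
  (∀ ⦃σ τ : Finset V⦄, σ ∈ X.faces → τ ⊆ σ → τ ∈ X.faces) ∧
  (∀ ⦃σ⦄, σ ∈ X.faces → σ.card ≤ n + 1) ∧
  (∀ ⦃σ⦄, σ ∈ X.faces → ∃ η ∈ X.faces, σ ⊆ η ∧ η.card = n + 1) ∧
  (∀ ⦃σ⦄, σ ∈ X.faces → 0 < X.m σ) ∧
  (∀ ⦃τ⦄, τ ∈ X.faces → τ.card ≤ n →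
    X.m τ = ∑ σ ∈ X.faces.filter (fun σ => τ ⊆ σ ∧ σ.card = τ.card + 1), X.m σ)

/-- `X.K c` : the faces with `c` elements, i.e. `X(c-1)` in dimension indexing. -/
def K (X : WSC V) (c : ℕ) : Finset (Finset V) := X.faces.filter (fun σ => σ.card = c)

/-- The weighted inner product on cochains supported on the faces with `c` elements. -/
def inn (X : WSC V) (c : ℕ) (φ ψ : Finset V → ℝ) : ℝ :=
  ∑ σ ∈ X.K c, X.m σ * (φ σ * ψ σ)

/-- The squared norm of a cochain on the faces with `c` elements. -/
def normSq (X : WSC V) (c : ℕ) (φ : Finset V → ℝ) : ℝ := X.inn c φ φ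

/-- The norm of a cochain on the faces with `c` elements. -/
def norm (X : WSC V) (c : ℕ) (φ : Finset V → ℝ) : ℝ := Real.sqrt (X.normSq c φ)

/-- `X.cochainZero c φ` : φ belongs to `C^{c-1}_0 (X, ℝ)`, i.e. it is orthogonal to the
constant functions at level `c`. -/
def cochainZero (X : WSC V) (c : ℕ) (φ : Finset V → ℝ) : Prop :=
  ∑ σ ∈ X.K c, X.m σ * φ σ = 0

/-- The signless differential, from cochains at level `c` to cochains at level `c+1`:
`(d φ)(σ) = ∑_{τ ∈ X(c-1), τ ⊂ σ} φ(τ)`. -/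
def d (X : WSC V) (c : ℕ) (φ : Finset V → ℝ) : Finset V → ℝ :=
  fun σ => ∑ τ ∈ (X.K c).filter (fun τ => τ ⊆ σ), φ τ

/-- The (explicit formula for the) adjoint of the signless differential, from cochains at
level `c+1` to cochains at level `c`: `(d* ψ)(τ) = ∑_{σ ⊇ τ} (m σ / m τ) ψ(σ)`. -/
def dStar (X : WSC V) (c : ℕ) (ψ : Finset V → ℝ) : Finset V → ℝ :=
  fun τ => ∑ σ ∈ (X.K (c + 1)).filter (fun σ => τ ⊆ σ), (X.m σ / X.m τ) * ψ σ

/-- The (lazy) upper random walk operator `M⁺` on cochains at level `c`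
(i.e. on `k`-cochains for `k = c-1`; note `k + 2 = c + 1`). -/
def Mup (X : WSC V) (c : ℕ) (φ : Finset V → ℝ) : Finset V → ℝ :=
  fun τ => (1 / ((c : ℝ) + 1)) * φ τ +
    ∑ τ' ∈ (X.K c).filter (fun τ' => τ ∪ τ' ∈ X.K (c + 1)),
      (X.m (τ ∪ τ') / (((c : ℝ) + 1) * X.m τ)) * φ τ'

/-- The lower random walk operator `M⁻` on cochains at level `c`
(i.e. on `k`-cochains for `k = c-1`; note `k + 1 = c`). -/
def Mdown (X : WSC V) (c : ℕ) (φ : Finset V → ℝ) : Finset V → ℝ :=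
  fun τ => (∑ η ∈ (X.K (c - 1)).filter (fun η => η ⊆ τ), X.m τ / ((c : ℝ) * X.m η)) * φ τ +
    ∑ τ' ∈ (X.K c).filter (fun τ' => τ' ≠ τ ∧ τ ∩ τ' ∈ X.K (c - 1)),
      (X.m τ' / ((c : ℝ) * X.m (τ ∩ τ'))) * φ τ'

/-- The non-lazy upper random walk operator `(M')⁺ = ((k+2)/(k+1)) M⁺ - (1/(k+1)) I`
on cochains at level `c = k+1`. -/
def Mup' (X : WSC V) (c : ℕ) (φ : Finset V → ℝ) : Finset V → ℝ :=
  fun τ => (((c : ℝ) + 1) / (c : ℝ)) * X.Mup c φ τ - (1 / (c : ℝ)) * φ τ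

/-- The link `X_τ` of a face `τ`, with the induced weight `m_τ (η) = m (τ ∪ η)`. -/
def link (X : WSC V) (τ : Finset V) : WSC V where
  faces := X.faces.filter (fun η => η ∩ τ = ∅ ∧ τ ∪ η ∈ X.faces)
  m := fun η => X.m (τ ∪ η)

/-- The localization `φ_τ (η) = φ (τ ∪ η)` of a cochain `φ` to the link of `τ`. -/
def localize (φ : Finset V → ℝ) (τ : Finset V) : Finset V → ℝ := fun η => φ (τ ∪ η)

/-- The underlying graph (1-skeleton) of a complex. -/
def skeleton (Y : WSC V) : SimpleGraph {v : V // ({v} : Finset V) ∈ Y.faces} where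
  Adj u w := u ≠ w ∧ ({(u : V), (w : V)} : Finset V) ∈ Y.faces
  symm := by
    constructor
    intro u w h
    refine ⟨h.1.symm, ?_⟩
    rw [Finset.pair_comm]
    exact h.2
  loopless := by constructor; intro u h; exact h.1 rfl

/-- All links of `X` of dimension `≥ 1` (including `X` itself, as the link of `∅`)
have a connected underlying graph. -/
def LinksConnected (X : WSC V) (n : ℕ) : Prop :=
  ∀ c < n, ∀ τ ∈ X.K c, (X.link τ).skeleton.Connected

/-- The second largest eigenvalue of the self-adjoint operator `(M')⁺₀` on `C⁰(Y, ℝ)`,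
via its Rayleigh-quotient characterization over the orthogonal complement of the
constant functions (the top eigenfunction). -/
def secondEig (Y : WSC V) : ℝ :=
  sSup {r : ℝ | ∃ ψ : Finset V → ℝ, Y.normSq 1 ψ ≠ 0 ∧
    (∑ v ∈ Y.K 1, Y.m v * ψ v) = 0 ∧ r = Y.inn 1 (Y.Mup' 1 ψ) ψ / Y.normSq 1 ψ}

/-- The smallest eigenvalue of the self-adjoint operator `(M')⁺₀` on `C⁰(Y, ℝ)`,
via its Rayleigh-quotient characterization. -/
def smallestEig (Y : WSC V) : ℝ :=
  sInf {r : ℝ | ∃ ψ : Finset V → ℝ, Y.normSq 1 ψ ≠ 0 ∧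
    r = Y.inn 1 (Y.Mup' 1 ψ) ψ / Y.normSq 1 ψ}

/-- `μ_k = max_{τ ∈ X(k-1)} μ_τ` where `μ_τ` is the second largest eigenvalue of
`(M')⁺_{τ,0}`; faces `τ ∈ X(k-1)` have `k` elements. -/
def mu (X : WSC V) (k : ℕ) : ℝ :=
  sSup {r : ℝ | ∃ τ ∈ X.K k, r = (X.link τ).secondEig}

/-- `ν_k = min_{τ ∈ X(k-1)} ν_τ` where `ν_τ` is the smallest eigenvalue of
`(M')⁺_{τ,0}`; faces `τ ∈ X(k-1)` have `k` elements. -/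
def nu (X : WSC V) (k : ℕ) : ℝ :=
  sInf {r : ℝ | ∃ τ ∈ X.K k, r = (X.link τ).smallestEig}

/-- `X` is a one-sided `λ`-local spectral expander: `μ_k ≤ λ` for every `0 ≤ k ≤ n-1`. -/
def OneSided (X : WSC V) (n : ℕ) (lam : ℝ) : Prop := ∀ k < n, X.mu k ≤ lam

/-- `X` is a two-sided `λ`-local spectral expander: `μ_k ≤ λ` and `ν_k ≥ -λ`
for every `0 ≤ k ≤ n-1`. -/
def TwoSided (X : WSC V) (n : ℕ) (lam : ℝ) : Prop :=
  ∀ k < n, X.mu k ≤ lam ∧ -lam ≤ X.nu k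

end WSC

/-!
Expanding `d* d φ (τ)` gives a sum over pairs `τ' ⊆ σ ⊇ τ` with `σ` one level up. The pairs with
`τ' = τ` contribute `φ τ` times `∑_{σ ⊇ τ} m σ / m τ`, which is `1` by the balance condition on
the weights; for `τ' ≠ τ` the face `σ` is forced to be `τ ∪ τ'`. Dually, in `d d* φ (τ)` the pairs
`η ⊆ τ'` with `η ⊆ τ` and `τ' ≠ τ` force `η = τ ∩ τ'`.
-/

namespace Finset

variable {α : Type*} [DecidableEq α] {s t u : Finset α}

theorem union_eq_of_ne_of_card_eq_succ (hsu : s ⊆ u) (htu : t ⊆ u) (hts : #t = #s)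
    (hu : #u = #s + 1) (hne : t ≠ s) : s ∪ t = u := by
  have hts' : ¬ t ⊆ s := fun h => hne (eq_of_subset_of_card_le h hts.ge)
  have hlt : #s < #(s ∪ t) :=
    card_lt_card ⟨subset_union_left, fun h => hts' (subset_union_right.trans h)⟩
  exact eq_of_subset_of_card_le (union_subset hsu htu) (by omega)

theorem inter_eq_of_ne_of_card_eq_succ (hus : u ⊆ s) (hut : u ⊆ t) (hts : #t = #s)
    (hs : #s = #u + 1) (hne : t ≠ s) : s ∩ t = u := by
  have hst : ¬ s ⊆ t := fun h => hne (eq_of_subset_of_card_le h hts.le).symm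
  have hlt : #(s ∩ t) < #s :=
    card_lt_card ⟨inter_subset_left, fun h => hst (h.trans inter_subset_right)⟩
  exact (eq_of_subset_of_card_le (subset_inter hus hut) (by omega)).symm

end Finset

namespace WSC

variable {V : Type*} [DecidableEq V] {X : WSC V} {n c : ℕ} {τ : Finset V}

theorem mem_K {σ : Finset V} : σ ∈ X.K c ↔ σ ∈ X.faces ∧ #σ = c := mem_filter

theorem IsWSC.m_pos (hX : X.IsWSC n) {σ : Finset V} (hσ : σ ∈ X.faces) : 0 < X.m σ :=
  hX.2.2.2.2.1 hσ

theorem IsWSC.m_eq_sum_K_succ (hX : X.IsWSC n) (hτ : τ ∈ X.K c) (hcn : c ≤ n) :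
    X.m τ = ∑ σ ∈ (X.K (c + 1)).filter (τ ⊆ ·), X.m σ := by
  obtain ⟨-, -, -, -, -, hbalance⟩ := hX
  obtain ⟨hτf, rfl⟩ := mem_K.mp hτ
  rw [hbalance hτf hcn, K, filter_filter]
  exact sum_congr (filter_congr fun σ _ => and_comm) fun _ _ => rfl

theorem sum_cofaces_sum_erase (hτ : τ ∈ X.K c) (f : Finset V → Finset V → ℝ) :
    ∑ σ ∈ (X.K (c + 1)).filter (τ ⊆ ·), ∑ τ' ∈ ((X.K c).filter (· ⊆ σ)).erase τ, f σ τ' =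
      ∑ τ' ∈ (X.K c).filter (fun τ' => τ ∪ τ' ∈ X.K (c + 1)), f (τ ∪ τ') τ' := by
  have hτc := (mem_K.mp hτ).2
  rw [sum_comm' (t' := (X.K c).filter (fun τ' => τ ∪ τ' ∈ X.K (c + 1)))
    (s' := fun τ' => {τ ∪ τ'})]
  · simp only [sum_singleton]
  intro σ τ'
  simp only [mem_filter, mem_erase, mem_singleton]
  constructor
  · rintro ⟨⟨hσ, hτσ⟩, hne, hτ', hτ'σ⟩
    have hunion : τ ∪ τ' = σ := union_eq_of_ne_of_card_eq_succ hτσ hτ'σ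
      (by rw [(mem_K.mp hτ').2, hτc]) (by rw [(mem_K.mp hσ).2, hτc]) hne
    exact ⟨hunion.symm, hτ', hunion ▸ hσ⟩
  · rintro ⟨rfl, hτ', hσ⟩
    refine ⟨⟨hσ, subset_union_left⟩, ?_, hτ', subset_union_right⟩
    rintro rfl
    have := (mem_K.mp hσ).2
    rw [union_self, hτc] at this
    omega

theorem sum_faces_sum_erase (hτ : τ ∈ X.K (c + 1)) (f : Finset V → Finset V → ℝ) :
    ∑ η ∈ (X.K c).filter (· ⊆ τ), ∑ τ' ∈ ((X.K (c + 1)).filter (η ⊆ ·)).erase τ, f η τ' =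
      ∑ τ' ∈ (X.K (c + 1)).filter (fun τ' => τ' ≠ τ ∧ τ ∩ τ' ∈ X.K c), f (τ ∩ τ') τ' := by
  have hτc := (mem_K.mp hτ).2
  rw [sum_comm' (t' := (X.K (c + 1)).filter (fun τ' => τ' ≠ τ ∧ τ ∩ τ' ∈ X.K c))
    (s' := fun τ' => {τ ∩ τ'})]
  · simp only [sum_singleton]
  intro η τ'
  simp only [mem_filter, mem_erase, mem_singleton]
  constructor
  · rintro ⟨⟨hη, hητ⟩, hne, hτ', hητ'⟩
    have hinter : τ ∩ τ' = η := inter_eq_of_ne_of_card_eq_succ hητ hητ'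
      (by rw [(mem_K.mp hτ').2, hτc]) (by rw [hτc, (mem_K.mp hη).2]) hne
    exact ⟨hinter.symm, hτ', hne, hinter ▸ hη⟩
  · rintro ⟨rfl, hτ', hne, hη⟩
    exact ⟨⟨hη, inter_subset_left⟩, hne, hτ', inter_subset_right⟩

theorem dStar_d_eq_mul_Mup (hX : X.IsWSC n) (hcn : c ≤ n) (φ : Finset V → ℝ)
    (hτ : τ ∈ X.K c) : X.dStar c (X.d c φ) τ = ((c : ℝ) + 1) * X.Mup c φ τ := by
  have hmτ : X.m τ ≠ 0 := (hX.m_pos (mem_K.mp hτ).1).ne'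
  have hdiag : ∑ σ ∈ (X.K (c + 1)).filter (τ ⊆ ·), X.m σ / X.m τ = 1 := by
    rw [← sum_div, ← hX.m_eq_sum_K_succ hτ hcn, div_self hmτ]
  have hexpand : X.dStar c (X.d c φ) τ =
      (∑ σ ∈ (X.K (c + 1)).filter (τ ⊆ ·), X.m σ / X.m τ) * φ τ +
        ∑ σ ∈ (X.K (c + 1)).filter (τ ⊆ ·),
          ∑ τ' ∈ ((X.K c).filter (· ⊆ σ)).erase τ, X.m σ / X.m τ * φ τ' := by
    rw [sum_mul, ← sum_add_distrib]
    refine sum_congr rfl fun σ hσ => ?_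
    have hτσ : τ ∈ (X.K c).filter (· ⊆ σ) := mem_filter.mpr ⟨hτ, (mem_filter.mp hσ).2⟩
    rw [d, ← add_sum_erase _ _ hτσ, mul_add, mul_sum]
  rw [hexpand, hdiag, sum_cofaces_sum_erase hτ, Mup, mul_add, mul_sum]
  congr 1
  · field_simp
  · exact sum_congr rfl fun τ' _ => by field_simp

theorem d_dStar_eq_mul_Mdown (φ : Finset V → ℝ) (hτ : τ ∈ X.K (c + 1)) :
    X.d c (X.dStar c φ) τ = ((c + 1 : ℕ) : ℝ) * X.Mdown (c + 1) φ τ := by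
  have hexpand : X.d c (X.dStar c φ) τ =
      (∑ η ∈ (X.K c).filter (· ⊆ τ), X.m τ / X.m η) * φ τ +
        ∑ η ∈ (X.K c).filter (· ⊆ τ),
          ∑ τ' ∈ ((X.K (c + 1)).filter (η ⊆ ·)).erase τ, X.m τ' / X.m η * φ τ' := by
    rw [sum_mul, ← sum_add_distrib]
    refine sum_congr rfl fun η hη => ?_
    have hητ : τ ∈ (X.K (c + 1)).filter (η ⊆ ·) := mem_filter.mpr ⟨hτ, (mem_filter.mp hη).2⟩
    rw [dStar, ← add_sum_erase _ _ hητ]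
  have hc : ((c + 1 : ℕ) : ℝ) ≠ 0 := by positivity
  rw [hexpand, sum_faces_sum_erase hτ, Mdown, Nat.add_sub_cancel, mul_add, ← mul_assoc,
    mul_sum, mul_sum]
  congr 1
  · congr 1
    exact sum_congr rfl fun η _ => by field_simp
  · exact sum_congr rfl fun τ' _ => by field_simp

end WSC

open WSC

/-- For every `0 ≤ k ≤ n-1` and `φ ∈ C^k(X,ℝ)`, `d*dφ = (k+2) M⁺_k φ`;
and for every `0 ≤ k ≤ n` and `φ ∈ C^k(X,ℝ)`, `dd*φ = (k+1) M⁻_k φ`.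
(Cardinality level `c = k + 1 ≥ 1`, so `k + 2 = c + 1` and `k + 1 = c`; the equalities
are between cochains, i.e. hold on every face of `X(k)`.) -/
theorem dStar_d_eq_Mup_and_d_dStar_eq_Mdown {V : Type*} [DecidableEq V] (X : WSC V)
    (n : ℕ) (hX : X.IsWSC n) (c : ℕ) (hc : 1 ≤ c) :
    (c ≤ n → ∀ φ : Finset V → ℝ, ∀ τ ∈ X.K c,
      X.dStar c (X.d c φ) τ = ((c : ℝ) + 1) * X.Mup c φ τ) ∧
    (c ≤ n + 1 → ∀ φ : Finset V → ℝ, ∀ τ ∈ X.K c,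
      X.d (c - 1) (X.dStar (c - 1) φ) τ = (c : ℝ) * X.Mdown c φ τ) := by
  refine ⟨fun hcn φ τ hτ => dStar_d_eq_mul_Mup hX hcn φ hτ, fun _ φ τ hτ => ?_⟩
  obtain ⟨k, rfl⟩ := Nat.exists_eq_add_of_le' hc
  exact d_dStar_eq_mul_Mdown φ hτ
end
end

section
/- For every −1 ≤ k < l ≤ n and every φ ∈ C^l(X,ℝ), binom(l+1, k+1) · ‖φ‖² = Σ_{τ ∈ X(k)} ‖φ_τ‖², where ‖φ_τ‖ is the norm of the localization φ_τ in C^{l−k−1}(X_τ,ℝ) with respect to the induced weight m_τ. -/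
/-!
Framework: a pure `n`-dimensional finite weighted simplicial complex, following
Kaufman–Oppenheim, "High Order Random Walks: Beyond Spectral Gap".

A complex is given by its finset of faces (finsets of a vertex type `V`) together with
a weight function `m`.  We index levels by **cardinality**: `X.K c` is the set of faces
with `c` elements, i.e. the set `X(k)` of `k`-dimensional faces for `k = c - 1`
(so `X(-1) = X.K 0`, and a pure `n`-dimensional complex has top level `X.K (n+1)`).
-/

noncomputable section

open Finset

open WSC

/-!
Writing out the link norm, `‖φ_τ‖²` is the sum of `m(σ) φ(σ)²` over the faces `σ ⊇ τ` of
`X(l)`, since `η ↦ τ ∪ η` is a bijection from `X_τ(l-k-1)` onto them. Summing over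
`τ ∈ X(k)` and exchanging the sums, each `σ ∈ X(l)` is counted once for each of its
`binom(l+1, k+1)` subsets of size `k+1`, all of which are faces of `X(k)`.
-/

namespace WSC

variable {V : Type*} [DecidableEq V] {X : WSC V}

def DownwardClosed (X : WSC V) : Prop :=
  ∀ ⦃σ τ : Finset V⦄, σ ∈ X.faces → τ ⊆ σ → τ ∈ X.faces

theorem IsWSC.downwardClosed {n : ℕ} (hX : X.IsWSC n) : X.DownwardClosed := hX.2.1

theorem filter_subset_K_eq_powersetCard (hX : X.DownwardClosed) {σ : Finset V}
    (hσ : σ ∈ X.faces) (c : ℕ) : (X.K c).filter (· ⊆ σ) = σ.powersetCard c := by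
  ext τ
  simp only [K, mem_filter, mem_powersetCard]
  exact ⟨fun ⟨⟨_, hc⟩, hs⟩ => ⟨hs, hc⟩, fun ⟨hs, hc⟩ => ⟨⟨hX hσ hs, hc⟩, hs⟩⟩

theorem sum_link_K (hX : X.DownwardClosed) {c c' : ℕ} (hcc' : c ≤ c') {τ : Finset V}
    (hτ : τ ∈ X.K c) (f : Finset V → ℝ) :
    ∑ η ∈ (X.link τ).K (c' - c), f (τ ∪ η) = ∑ σ ∈ (X.K c').filter (τ ⊆ ·), f σ := by
  simp only [K, mem_filter] at hτ
  refine sum_nbij' (τ ∪ ·) (· \ τ) ?_ ?_ ?_ ?_ (fun _ _ => rfl)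
  · intro η hη
    simp only [K, link, mem_filter, ← disjoint_iff_inter_eq_empty] at hη ⊢
    obtain ⟨⟨-, hdisj, hface⟩, hcard⟩ := hη
    refine ⟨⟨hface, ?_⟩, subset_union_left⟩
    rw [card_union_of_disjoint hdisj.symm]
    omega
  · intro σ hσ
    simp only [K, link, mem_filter, ← disjoint_iff_inter_eq_empty] at hσ ⊢
    obtain ⟨⟨hface, hcard⟩, hτσ⟩ := hσ
    refine ⟨⟨hX hface sdiff_subset, sdiff_disjoint, ?_⟩, ?_⟩
    · rwa [union_sdiff_of_subset hτσ]
    · rw [card_sdiff_of_subset hτσ, hcard, hτ.2]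
  · intro η hη
    simp only [K, link, mem_filter, ← disjoint_iff_inter_eq_empty] at hη
    exact union_sdiff_cancel_left hη.1.2.1.symm
  · intro σ hσ
    simp only [K, mem_filter] at hσ
    exact union_sdiff_of_subset hσ.2

theorem sum_K_sum_superfaces (hX : X.DownwardClosed) (c c' : ℕ) (g : Finset V → ℝ) :
    ∑ τ ∈ X.K c, ∑ σ ∈ (X.K c').filter (τ ⊆ ·), g σ =
      ∑ σ ∈ X.K c', (c'.choose c : ℝ) * g σ := by
  rw [sum_comm' (t' := X.K c') (s' := fun σ => (X.K c).filter (· ⊆ σ))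
    (fun τ σ => by simp only [mem_filter]; tauto)]
  refine sum_congr rfl fun σ hσ => ?_
  obtain ⟨hface, hcard⟩ := mem_filter.1 hσ
  rw [sum_const, nsmul_eq_mul, filter_subset_K_eq_powersetCard hX hface, card_powersetCard,
    hcard]

theorem link_normSq_localize (hX : X.DownwardClosed) {c c' : ℕ} (hcc' : c ≤ c')
    {τ : Finset V} (hτ : τ ∈ X.K c) (φ : Finset V → ℝ) :
    (X.link τ).normSq (c' - c) (localize φ τ) =
      ∑ σ ∈ (X.K c').filter (τ ⊆ ·), X.m σ * (φ σ * φ σ) :=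
  sum_link_K hX hcc' hτ fun σ => X.m σ * (φ σ * φ σ)

end WSC

theorem localization_normSq_general {V : Type*} [DecidableEq V] (X : WSC V) (n : ℕ)
    (hX : X.IsWSC n) (c c' : ℕ) (hcc' : c < c') (φ : Finset V → ℝ) :
    (Nat.choose c' c : ℝ) * X.normSq c' φ =
      ∑ τ ∈ X.K c, (X.link τ).normSq (c' - c) (localize φ τ) := by
  rw [sum_congr rfl fun τ hτ => link_normSq_localize hX.downwardClosed hcc'.le hτ φ,
    sum_K_sum_superfaces hX.downwardClosed, normSq, inn, mul_sum]

/-- For every `-1 ≤ k < l ≤ n` and every `φ ∈ C^l(X,ℝ)`,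
`binom(l+1, k+1) ‖φ‖² = Σ_{τ ∈ X(k)} ‖φ_τ‖²`, where `φ_τ ∈ C^{l-k-1}(X_τ,ℝ)` is the
localization, with the norm induced by the weight `m_τ` of the link.
(Cardinality levels `c = k + 1 < c' = l + 1`; `φ_τ` lives at link level `c' - c`.) -/
theorem localization_normSq {V : Type*} [DecidableEq V] (X : WSC V) (n : ℕ)
    (hX : X.IsWSC n) (c c' : ℕ) (hcc' : c < c') (hc' : c' ≤ n + 1) (φ : Finset V → ℝ) :
    (Nat.choose c' c : ℝ) * X.normSq c' φ =
      ∑ τ ∈ X.K c, (X.link τ).normSq (c' - c) (localize φ τ) :=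
  localization_normSq_general X n hX c c' hcc' φ
end
end

section
/- For every −1 ≤ k < l ≤ n and every φ ∈ C^l(X,ℝ), binom(l, k+1) · ‖d*φ‖² = Σ_{τ ∈ X(k)} ‖d*_τ φ_τ‖², where d*_τ is the adjoint of the signless differential on cochains of the link X_τ. -/
/-!
Framework: a pure `n`-dimensional finite weighted simplicial complex, following
Kaufman–Oppenheim, "High Order Random Walks: Beyond Spectral Gap".

A complex is given by its finset of faces (finsets of a vertex type `V`) together with
a weight function `m`.  We index levels by **cardinality**: `X.K c` is the set of faces
with `c` elements, i.e. the set `X(k)` of `k`-dimensional faces for `k = c - 1`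
(so `X(-1) = X.K 0`, and a pure `n`-dimensional complex has top level `X.K (n+1)`).
-/

noncomputable section

open Finset

open WSC

/-!
The map `η ↦ τ ∪ η` identifies the faces of the link `X_τ` with the faces of `X` containing
`τ`, and under it `d*_τ φ_τ` becomes the restriction of `d*φ` (the weights `m_τ(η) = m(τ ∪ η)`
make the ratios in `d*` match). Hence `‖d*_τ φ_τ‖²` is the part of `‖d*φ‖²` carried by the
`(l-1)`-faces containing `τ`, and summing over `τ ∈ X(k)` counts every `(l-1)`-face once for
each of its `binom(l, k+1)` subfaces in `X(k)`.
-/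

namespace WSC

variable {V : Type*} [DecidableEq V] {X : WSC V}

theorem IsWSC.isLowerSet {n : ℕ} (hX : X.IsWSC n) : IsLowerSet (X.faces : Set (Finset V)) :=
  fun _ _ hle h => hX.2.1 h hle

theorem mem_link_K {τ η : Finset V} {j : ℕ} :
    η ∈ (X.link τ).K j ↔ (η ∈ X.faces ∧ η ∩ τ = ∅ ∧ τ ∪ η ∈ X.faces) ∧ η.card = j := by
  simp only [K, link, mem_filter]

theorem disjoint_of_mem_link_K {τ η : Finset V} {j : ℕ} (hη : η ∈ (X.link τ).K j) :
    Disjoint η τ :=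
  disjoint_iff_inter_eq_empty.2 (mem_link_K.1 hη).1.2.1

theorem sum_filter_link_K {M : Type*} [AddCommMonoid M]
    (hX : IsLowerSet (X.faces : Set (Finset V))) {τ η : Finset V} (hητ : Disjoint η τ)
    (j : ℕ) (f : Finset V → M) :
    ∑ σ ∈ ((X.link τ).K j).filter (η ⊆ ·), f σ =
      ∑ ρ ∈ (X.K (τ.card + j)).filter (τ ∪ η ⊆ ·), f (ρ \ τ) := by
  refine sum_bij' (fun σ _ => τ ∪ σ) (fun ρ _ => ρ \ τ) ?_ ?_ ?_ ?_ ?_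
  · intro σ hσ
    obtain ⟨hσ, hησ⟩ := mem_filter.1 hσ
    obtain ⟨⟨-, -, hτσ⟩, hcard⟩ := mem_link_K.1 hσ
    simp only [K, mem_filter]
    refine ⟨⟨hτσ, ?_⟩, union_subset_union_right hησ⟩
    rw [card_union_of_disjoint (disjoint_of_mem_link_K hσ).symm, hcard]
  · intro ρ hρ
    obtain ⟨⟨hρ, hcard⟩, hτηρ⟩ := by simpa only [K, mem_filter] using hρ
    obtain ⟨hτρ, hηρ⟩ := union_subset_iff.1 hτηρ
    refine mem_filter.2 ⟨mem_link_K.2 ⟨⟨hX sdiff_subset hρ, sdiff_inter_self _ _, ?_⟩, ?_⟩,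
      subset_sdiff.2 ⟨hηρ, hητ⟩⟩
    · rwa [union_sdiff_of_subset hτρ]
    · rw [card_sdiff_of_subset hτρ, hcard, Nat.add_sub_cancel_left]
  · intro σ hσ
    exact union_sdiff_cancel_left (disjoint_of_mem_link_K (mem_filter.1 hσ).1).symm
  · intro ρ hρ
    exact union_sdiff_of_subset (union_subset_iff.1 (mem_filter.1 hρ).2).1
  · intro σ hσ
    rw [union_sdiff_cancel_left (disjoint_of_mem_link_K (mem_filter.1 hσ).1).symm]

theorem sum_link_K_s7 {M : Type*} [AddCommMonoid M]
    (hX : IsLowerSet (X.faces : Set (Finset V))) (τ : Finset V) (j : ℕ) (f : Finset V → M) :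
    ∑ σ ∈ (X.link τ).K j, f σ = ∑ ρ ∈ (X.K (τ.card + j)).filter (τ ⊆ ·), f (ρ \ τ) := by
  simpa using sum_filter_link_K hX (disjoint_empty_left τ) j f

theorem dStar_link_localize (hX : IsLowerSet (X.faces : Set (Finset V))) {τ η : Finset V}
    (hητ : Disjoint η τ) (j : ℕ) (φ : Finset V → ℝ) :
    (X.link τ).dStar j (localize φ τ) η = X.dStar (τ.card + j) φ (τ ∪ η) := by
  simp only [dStar]
  rw [sum_filter_link_K hX hητ]
  refine sum_congr rfl fun ρ hρ => ?_
  have hτρ : τ ⊆ ρ := (union_subset_iff.1 (mem_filter.1 hρ).2).1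
  simp only [link, localize, union_sdiff_of_subset hτρ]

theorem normSq_congr {c : ℕ} {φ ψ : Finset V → ℝ} (h : ∀ σ ∈ X.K c, φ σ = ψ σ) :
    X.normSq c φ = X.normSq c ψ :=
  sum_congr rfl fun σ hσ => by rw [h σ hσ]

theorem normSq_link_localize (hX : IsLowerSet (X.faces : Set (Finset V))) (τ : Finset V)
    (j : ℕ) (ψ : Finset V → ℝ) :
    (X.link τ).normSq j (localize ψ τ) =
      ∑ ρ ∈ (X.K (τ.card + j)).filter (τ ⊆ ·), X.m ρ * (ψ ρ * ψ ρ) := by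
  rw [normSq, inn, sum_link_K_s7 hX]
  refine sum_congr rfl fun ρ hρ => ?_
  simp only [link, localize, union_sdiff_of_subset (mem_filter.1 hρ).2]

theorem normSq_link_dStar_localize (hX : IsLowerSet (X.faces : Set (Finset V)))
    (τ : Finset V) (j : ℕ) (φ : Finset V → ℝ) :
    (X.link τ).normSq j ((X.link τ).dStar j (localize φ τ)) =
      ∑ ρ ∈ (X.K (τ.card + j)).filter (τ ⊆ ·),
        X.m ρ * (X.dStar (τ.card + j) φ ρ * X.dStar (τ.card + j) φ ρ) := by
  rw [← normSq_link_localize hX]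
  exact normSq_congr fun η hη => dStar_link_localize hX (disjoint_of_mem_link_K hη) j φ

theorem filter_K_subset_eq_powersetCard (hX : IsLowerSet (X.faces : Set (Finset V)))
    {ρ : Finset V} (hρ : ρ ∈ X.faces) (c : ℕ) :
    (X.K c).filter (· ⊆ ρ) = ρ.powersetCard c := by
  ext τ
  simp only [K, mem_filter, mem_powersetCard]
  exact ⟨fun h => ⟨h.2, h.1.2⟩, fun h => ⟨⟨hX h.1 hρ, h.2⟩, h.1⟩⟩

theorem sum_K_sum_filter_superset {M : Type*} [AddCommMonoid M]
    (hX : IsLowerSet (X.faces : Set (Finset V))) (c c' : ℕ) (f : Finset V → M) :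
    ∑ τ ∈ X.K c, ∑ ρ ∈ (X.K c').filter (τ ⊆ ·), f ρ = c'.choose c • ∑ ρ ∈ X.K c', f ρ := by
  rw [sum_comm' (t' := X.K c') (s' := fun ρ => (X.K c).filter (· ⊆ ρ))
    (fun τ ρ => by simp only [mem_filter]; tauto), smul_sum]
  refine sum_congr rfl fun ρ hρ => ?_
  obtain ⟨hρ, hcard⟩ := mem_filter.1 hρ
  rw [sum_const, filter_K_subset_eq_powersetCard hX hρ, card_powersetCard, hcard]

end WSC

/- In cardinality levels: `c = k + 1`, `c' = l + 1`, so `binom(l, k+1) = binom(c' - 1, c)`,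
`d*φ` lives at level `c' - 1` and `d*_τ φ_τ` at link level `c' - c - 1`. -/
theorem localization_dStar_normSq_general {V : Type*} [DecidableEq V] (X : WSC V) (n : ℕ)
    (hX : X.IsWSC n) (c c' : ℕ) (hcc' : c < c') (φ : Finset V → ℝ) :
    (Nat.choose (c' - 1) c : ℝ) * X.normSq (c' - 1) (X.dStar (c' - 1) φ) =
      ∑ τ ∈ X.K c,
        (X.link τ).normSq (c' - c - 1) ((X.link τ).dStar (c' - c - 1) (localize φ τ)) := by
  have hlevel : ∀ τ ∈ X.K c, τ.card + (c' - c - 1) = c' - 1 := fun τ hτ => by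
    rw [(mem_filter.1 hτ).2]; omega
  rw [sum_congr rfl fun τ hτ => by rw [normSq_link_dStar_localize hX.isLowerSet, hlevel τ hτ],
    sum_K_sum_filter_superset hX.isLowerSet, nsmul_eq_mul, normSq, inn]

/-- For every `-1 ≤ k < l ≤ n` and every `φ ∈ C^l(X,ℝ)`,
`binom(l, k+1) ‖d*φ‖² = Σ_{τ ∈ X(k)} ‖d*_τ φ_τ‖²`, where `d*_τ` is the adjoint of the
signless differential on cochains of the link `X_τ`.
(Cardinality levels `c = k + 1 < c' = l + 1`; `binom(l, k+1) = binom(c' - 1, c)`;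
`d* φ` lives at level `c' - 1` and `d*_τ φ_τ` at link level `c' - c - 1`.) -/
theorem localization_dStar_normSq {V : Type*} [DecidableEq V] (X : WSC V) (n : ℕ)
    (hX : X.IsWSC n) (c c' : ℕ) (hcc' : c < c') (hc' : c' ≤ n + 1) (φ : Finset V → ℝ) :
    (Nat.choose (c' - 1) c : ℝ) * X.normSq (c' - 1) (X.dStar (c' - 1) φ) =
      ∑ τ ∈ X.K c,
        (X.link τ).normSq (c' - c - 1) ((X.link τ).dStar (c' - c - 1) (localize φ τ)) :=
  localization_dStar_normSq_general X n hX c c' hcc' φ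
end
end
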